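/- Let N = (β_A : A ⊆ {2,…,n}, |A| = m−1) be the monomial ideal of the nontrivial degeneration generators. Then N^s ⊆ (N^r)^{[2]} whenever s ≥ 2r+1, where (N^r)^{[2]} is the ideal generated by squares of monomials in N^r. -/

import Mathlib

open MvPolynomial Finset

/-- The set `V = {(i,j) ∈ [m]×[n] : m−i < j ≤ n−i+1}` (1-based indices). -/
def Vset (m n : ℕ) : Finset (ℕ × ℕ) :=
  ((Finset.Icc 1 m) ×ˢ (Finset.Icc 1 n)).filter
    (fun p => m - p.1 < p.2 ∧ p.2 ≤ n - p.1 + 1)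

/-- `a : ℕ → ℕ` represents an `(m−1)`-element subset `A = {a 1 < … < a (m−1)} ⊆ {2,…,n}`,
together with the conventions `a 0 = 1` and `a m = n + 1`. -/
def SubsetRep (m n : ℕ) (a : ℕ → ℕ) : Prop :=
  a 0 = 1 ∧ a m = n + 1 ∧ ∀ i < m, a i < a (i + 1)

/-- The region `D_A = {(i,j) ∈ V : a_{m−i} ≤ j < a_{m−i+1}}`. -/
def Dset (m n : ℕ) (a : ℕ → ℕ) : Finset (ℕ × ℕ) :=
  (Vset m n).filter (fun p => a (m - p.1) ≤ p.2 ∧ p.2 < a (m - p.1 + 1))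

variable (K : Type*) [Field K]

/-- The squarefree monomial `β_A = ∏_{(i,j) ∈ V ∖ D_A} x_{i,j}`. -/
noncomputable def betaM (m n : ℕ) (a : ℕ → ℕ) : MvPolynomial (ℕ × ℕ) K :=
  ∏ p ∈ Vset m n \ Dset m n a, X p

/-- The antidiagonal monomial `α_j = ∏_{i=1}^m x_{m−i+1, j+i−1}`. -/
noncomputable def alphaM (m : ℕ) (j : ℕ) : MvPolynomial (ℕ × ℕ) K :=
  ∏ i ∈ Finset.Icc 1 m, X (m - i + 1, j + i - 1)

/-- The ideal `N` generated by the monomials `β_A` for all `(m−1)`-element subsets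
`A ⊆ {2,…,n}`. -/
noncomputable def Nideal (m n : ℕ) : Ideal (MvPolynomial (ℕ × ℕ) K) :=
  Ideal.span { f | ∃ a : ℕ → ℕ, SubsetRep m n a ∧ f = betaM K m n a }

/-- `A k`, `1 ≤ k ≤ s`, is a chain `A₁ ≤ … ≤ A_s` of `(m−1)`-element subsets of `{2,…,n}`,
where `≤` is the componentwise partial order. -/
def BetaChain (m n s : ℕ) (A : ℕ → ℕ → ℕ) : Prop :=
  (∀ k, 1 ≤ k → k ≤ s → SubsetRep m n (A k)) ∧
    (∀ k, 1 ≤ k → k + 1 ≤ s → ∀ i ≤ m, A k i ≤ A (k + 1) i)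

/-- `W^{[2]}` : the ideal generated by the squares of all the monomials in `W`. -/
noncomputable def bracketTwo {σ : Type*} (W : Ideal (MvPolynomial σ K)) :
    Ideal (MvPolynomial σ K) :=
  Ideal.span { g | ∃ d : σ →₀ ℕ, (monomial d (1 : K)) ∈ W ∧ g = (monomial d (1 : K)) ^ 2 }

/-- The symbolic power `I^{(n)} = ⋂_{p ∈ Min(I)} (pⁿ R_p ∩ R)`. -/
noncomputable def symbolicPower {R : Type*} [CommRing R] (I : Ideal R) (n : ℕ) : Ideal R :=
  ⨅ p : {q : Ideal R // q ∈ I.minimalPrimes},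
    letI : p.1.IsPrime := p.2.1.1
    ((p.1 ^ n).map (algebraMap R (Localization.AtPrime p.1))).comap
      (algebraMap R (Localization.AtPrime p.1))


namespace Stmt10Aux

open MvPolynomial Finset Pointwise

lemma rep_mono {m n : ℕ} {a : ℕ → ℕ} (H : SubsetRep m n a) :
    ∀ {i j : ℕ}, i ≤ j → j ≤ m → a i ≤ a j := by
  intro i j hij hjm
  induction j with
  | zero =>
      have h0 : i = 0 := Nat.le_zero.mp hij
      simp [h0]
  | succ j ih =>
      rcases Nat.lt_or_ge i (j + 1) with h | h
      · have h1 := ih (Nat.lt_succ_iff.mp h) (by omega)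
        exact h1.trans (le_of_lt (H.2.2 j (by omega)))
      · have h2 : i = j + 1 := le_antisymm hij h
        simp [h2]

lemma rep_pos {m n : ℕ} {a : ℕ → ℕ} (H : SubsetRep m n a) {i : ℕ} (him : i ≤ m) :
    1 ≤ a i := by
  have h1 := rep_mono H (Nat.zero_le i) him
  have h2 := H.1
  omega

section Count

variable {m n s : ℕ} (A : Fin s → ℕ → ℕ)

/-- number of `k` with `A k i ≤ v`. -/
def cnt (i v : ℕ) : ℕ := (Finset.univ.filter fun k => A k i ≤ v).card

lemma cnt_le (i v : ℕ) : cnt A i v ≤ s := by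
  classical
  calc cnt A i v ≤ (Finset.univ : Finset (Fin s)).card := Finset.card_filter_le _ _
  _ = s := by simp

lemma cnt_mono {i : ℕ} {v w : ℕ} (h : v ≤ w) : cnt A i v ≤ cnt A i w :=
  Finset.card_le_card (Finset.monotone_filter_right _ fun k _ hk => hk.trans h)

/-- the `h`-th smallest (0-indexed) among the `A k i`. -/
noncomputable def OS (h i : ℕ) : ℕ := sInf {v | h + 1 ≤ cnt A i v}

variable {A}

lemma os_nonempty (HA : ∀ k, SubsetRep m n (A k)) {h i : ℕ} (hh : h < s) (him : i ≤ m) :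
    {v | h + 1 ≤ cnt A i v}.Nonempty := by
  classical
  refine ⟨n + 1, ?_⟩
  have hall : ∀ k, A k i ≤ n + 1 := fun k => le_of_le_of_eq (rep_mono (HA k) him le_rfl) (HA k).2.1
  have : cnt A i (n + 1) = s := by
    unfold cnt
    rw [Finset.filter_true_of_mem fun k _ => hall k]
    simp
  simp only [Set.mem_setOf_eq, this]
  omega

lemma OS_mem (HA : ∀ k, SubsetRep m n (A k)) {h i : ℕ} (hh : h < s) (him : i ≤ m) :
    h + 1 ≤ cnt A i (OS A h i) :=
  Nat.sInf_mem (os_nonempty HA hh him)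

lemma OS_le_iff (HA : ∀ k, SubsetRep m n (A k)) {h i : ℕ} (hh : h < s) (him : i ≤ m)
    {v : ℕ} : OS A h i ≤ v ↔ h + 1 ≤ cnt A i v := by
  constructor
  · intro hle
    exact le_trans (OS_mem HA hh him) (cnt_mono A hle)
  · intro hv
    exact Nat.sInf_le hv

lemma exists_le_of_cnt {i v h : ℕ} (hc : h + 1 ≤ cnt A i v) : ∃ k, A k i ≤ v := by
  classical
  have : 0 < (Finset.univ.filter fun k => A k i ≤ v).card := by
    unfold cnt at hc; omega
  obtain ⟨k, hk⟩ := Finset.card_pos.mp this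
  exact ⟨k, (Finset.mem_filter.mp hk).2⟩

lemma OS_rep (HA : ∀ k, SubsetRep m n (A k)) {h : ℕ} (hh : h < s) :
    SubsetRep m n (OS A h) := by
  classical
  refine ⟨?_, ?_, ?_⟩
  · -- OS A h 0 = 1
    have h1 : OS A h 0 ≤ 1 := by
      apply Nat.sInf_le
      have : cnt A 0 1 = s := by
        unfold cnt
        rw [Finset.filter_true_of_mem fun k _ => by rw [(HA k).1]]
        simp
      simp only [Set.mem_setOf_eq, this]
      omega
    have h2 : 1 ≤ OS A h 0 := by
      obtain ⟨k, hk⟩ := exists_le_of_cnt (OS_mem HA hh (Nat.zero_le m))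
      have := (HA k).1
      omega
    omega
  · -- OS A h m = n + 1
    have h1 : OS A h m ≤ n + 1 := by
      apply Nat.sInf_le
      have : cnt A m (n + 1) = s := by
        unfold cnt
        rw [Finset.filter_true_of_mem fun k _ => le_of_eq (HA k).2.1]
        simp
      simp only [Set.mem_setOf_eq, this]
      omega
    have h2 : n + 1 ≤ OS A h m := by
      obtain ⟨k, hk⟩ := exists_le_of_cnt (OS_mem HA hh le_rfl)
      have := (HA k).2.1
      omega
    omega
  · -- strictly increasing
    intro i hi
    have hmem := OS_mem HA hh (show i + 1 ≤ m by omega)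
    have hpos : 1 ≤ OS A h (i + 1) := by
      obtain ⟨k, hk⟩ := exists_le_of_cnt hmem
      have := rep_pos (HA k) (show i + 1 ≤ m by omega)
      omega
    have hsub : h + 1 ≤ cnt A i (OS A h (i + 1) - 1) := by
      refine le_trans hmem (Finset.card_le_card ?_)
      intro k hk
      rw [Finset.mem_filter] at hk ⊢
      refine ⟨hk.1, ?_⟩
      have hstep := (HA k).2.2 i hi
      have := hk.2
      omega
    have hle : OS A h i ≤ OS A h (i + 1) - 1 := Nat.sInf_le hsub
    omega

end Count

section Expo

variable {K : Type*} [Field K]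

lemma prod_X_eq (T : Finset (ℕ × ℕ)) :
    (∏ p ∈ T, (X p : MvPolynomial (ℕ × ℕ) K)) = monomial (∑ p ∈ T, Finsupp.single p 1) 1 := by
  classical
  induction T using Finset.induction with
  | empty => simp
  | insert _ _ hnot ih =>
      rw [Finset.prod_insert hnot, Finset.sum_insert hnot, ih, X, monomial_mul, one_mul]

lemma prod_monomial_one {ι : Type*} (T : Finset ι) (d : ι → ((ℕ × ℕ) →₀ ℕ)) :
    (∏ i ∈ T, (monomial (d i) (1 : K))) = monomial (∑ i ∈ T, d i) 1 := by
  classical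
  induction T using Finset.induction with
  | empty => simp
  | insert _ _ hnot ih =>
      rw [Finset.prod_insert hnot, Finset.sum_insert hnot, ih, monomial_mul, one_mul]

end Expo

/-- exponent vector of `betaM`. -/
noncomputable def expo (m n : ℕ) (a : ℕ → ℕ) : (ℕ × ℕ) →₀ ℕ :=
  ∑ p ∈ Vset m n \ Dset m n a, Finsupp.single p 1

lemma betaM_eq (K : Type*) [Field K] (m n : ℕ) (a : ℕ → ℕ) :
    betaM K m n a = monomial (expo m n a) 1 :=
  prod_X_eq _

lemma expo_apply (m n : ℕ) (a : ℕ → ℕ) (q : ℕ × ℕ) :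
    expo m n a q = if q ∈ Vset m n \ Dset m n a then 1 else 0 := by
  classical
  rw [expo, Finsupp.finset_sum_apply]
  simp [Finsupp.single_apply]

lemma mem_D_iff {m n : ℕ} {a : ℕ → ℕ} {q : ℕ × ℕ} (hq : q ∈ Vset m n) :
    q ∈ Dset m n a ↔ (a (m - q.1) ≤ q.2 ∧ q.2 < a (m - q.1 + 1)) := by
  simp [Dset, Finset.mem_filter, hq]

lemma sum_expo_apply {m n : ℕ} {ι : Type*} [DecidableEq ι] (T : Finset ι) (a : ι → ℕ → ℕ)
    {q : ℕ × ℕ} (hq : q ∈ Vset m n) :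
    (∑ k ∈ T, expo m n (a k) q) + (T.filter fun k => q ∈ Dset m n (a k)).card = T.card := by
  classical
  rw [Finset.card_filter, ← Finset.sum_add_distrib]
  have hterm : ∀ k ∈ T,
      expo m n (a k) q + (if q ∈ Dset m n (a k) then 1 else 0) = 1 := by
    intro k _
    rw [expo_apply]
    by_cases h : q ∈ Dset m n (a k) <;> simp [Finset.mem_sdiff, hq, h]
  rw [Finset.sum_congr rfl hterm, Finset.sum_const, smul_eq_mul, mul_one]

end Stmt10Aux

/-- `N^s ⊆ (N^r)^{[2]}` whenever `s ≥ 2r + 1`, where `(N^r)^{[2]}`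
is the ideal generated by the squares of the monomials in `N^r`. -/
theorem stmt_10 (m n : ℕ) (hm : 1 ≤ m) (hmn : m ≤ n) (s r : ℕ) (hsr : 2 * r + 1 ≤ s) :
    Nideal K m n ^ s ≤ bracketTwo K (Nideal K m n ^ r) := by
  classical
  open Pointwise Stmt10Aux in
  refine le_trans (Ideal.pow_le_pow_right hsr) ?_
  set t := 2 * r + 1 with ht
  have hspan : Nideal K m n ^ t
      = Ideal.span ({ f | ∃ a : ℕ → ℕ, SubsetRep m n a ∧ f = betaM K m n a } ^ t) := by
    rw [Nideal]; exact Submodule.span_pow _ t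
  rw [hspan, Ideal.span_le]
  rintro x hx
  rw [Set.mem_pow] at hx
  obtain ⟨f, hf⟩ := hx
  rw [List.prod_ofFn] at hf
  have hmem : ∀ i : Fin t, ∃ a : ℕ → ℕ, SubsetRep m n a ∧ (f i : MvPolynomial (ℕ × ℕ) K) = betaM K m n a :=
    fun i => (f i).2
  choose a HA hfa using hmem
  have hx' : x = ∏ i : Fin t, betaM K m n (a i) := by
    rw [← hf]
    exact Finset.prod_congr rfl fun i _ => hfa i
  -- total exponent vectors
  set Dtot : (ℕ × ℕ) →₀ ℕ := ∑ i : Fin t, expo m n (a i) with hDdef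
  set Etot : (ℕ × ℕ) →₀ ℕ := ∑ k ∈ Finset.range r, expo m n (OS a (2 * k + 1)) with hEdef
  have hxD : x = monomial Dtot (1 : K) := by
    rw [hx', Finset.prod_congr rfl fun i _ => betaM_eq K m n (a i), prod_monomial_one]
  have hCrep : ∀ k : ℕ, k < r → SubsetRep m n (OS a (2 * k + 1)) :=
    fun k hk => OS_rep HA (by omega)
  have hM : (monomial Etot (1 : K)) ∈ Nideal K m n ^ r := by
    have hprod : (monomial Etot (1 : K))
        = ∏ k ∈ Finset.range r, betaM K m n (OS a (2 * k + 1)) := by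
      rw [Finset.prod_congr rfl fun k _ => betaM_eq K m n (OS a (2 * k + 1)),
        prod_monomial_one]
    rw [hprod]
    have hmm := Ideal.prod_mem_prod (s := Finset.range r)
      (I := fun _ => Nideal K m n)
      (x := fun k => betaM K m n (OS a (2 * k + 1)))
      (fun k hk => Ideal.subset_span
        ⟨OS a (2 * k + 1), hCrep k (Finset.mem_range.mp hk), rfl⟩)
    simpa [Finset.prod_const, Finset.card_range] using hmm
  -- the key exponent inequality
  have hle : 2 • Etot ≤ Dtot := by
    rw [Finsupp.le_def]
    intro q
    rw [Finsupp.smul_apply, smul_eq_mul]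
    by_cases hq : q ∈ Vset m n
    · -- main case
      set i := m - q.1 with hidef
      have hq1 : 1 ≤ q.1 ∧ q.1 ≤ m := by
        have := (Finset.mem_filter.mp hq).1
        rw [Finset.mem_product] at this
        exact ⟨(Finset.mem_Icc.mp this.1).1, (Finset.mem_Icc.mp this.1).2⟩
      have hilt : i < m := by omega
      set j := q.2 with hjdef
      set P := cnt a i j with hPdef
      set Qc := cnt a (i + 1) j with hQdef
      have hQP : Qc ≤ P := by
        refine Finset.card_le_card ?_
        intro k hk
        rw [Finset.mem_filter] at hk ⊢
        refine ⟨hk.1, ?_⟩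
        have := (HA k).2.2 i hilt
        have := hk.2
        omega
      have hPt : P ≤ t := cnt_le a i j
      -- count for Dtot
      have hDq : Dtot q + ((Finset.univ : Finset (Fin t)).filter
          fun k => q ∈ Dset m n (a k)).card = t := by
        have h0 := sum_expo_apply (Finset.univ : Finset (Fin t)) a hq
        have hDq' : Dtot q = ∑ k : Fin t, expo m n (a k) q := by
          rw [hDdef, Finsupp.finset_sum_apply]
        rw [hDq']
        simpa [Finset.card_univ] using h0
      have hDcnt : ((Finset.univ : Finset (Fin t)).filter
          fun k => q ∈ Dset m n (a k)).card + Qc = P := by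
        have e1 : ∀ k : Fin t,
            (q ∈ Dset m n (a k)) ↔ (a k i ≤ j ∧ ¬ (a k (i + 1) ≤ j)) := by
          intro k
          rw [mem_D_iff hq]
          simp only [← hidef, ← hjdef]
          constructor
          · rintro ⟨h1, h2⟩; exact ⟨h1, by omega⟩
          · rintro ⟨h1, h2⟩; exact ⟨h1, by omega⟩
        have key := Finset.card_filter_add_card_filter_not
          (s := (Finset.univ : Finset (Fin t)).filter fun k => a k i ≤ j)
          (fun k => a k (i + 1) ≤ j)
        rw [Finset.filter_filter, Finset.filter_filter] at key
        have e2 : ((Finset.univ : Finset (Fin t)).filter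
            fun k => a k i ≤ j ∧ a k (i + 1) ≤ j)
            = (Finset.univ : Finset (Fin t)).filter fun k => a k (i + 1) ≤ j := by
          apply Finset.filter_congr
          intro k _
          have := (HA k).2.2 i hilt
          constructor
          · rintro ⟨_, h2⟩; exact h2
          · intro h2; exact ⟨by omega, h2⟩
        have e3 : ((Finset.univ : Finset (Fin t)).filter
            fun k => a k i ≤ j ∧ ¬ a k (i + 1) ≤ j)
            = (Finset.univ : Finset (Fin t)).filter fun k => q ∈ Dset m n (a k) := by
          apply Finset.filter_congr
          intro k _
          rw [e1 k]
        rw [e2, e3] at key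
        rw [hQdef, hPdef]
        unfold cnt
        omega
      -- count for Etot
      have hEq : Etot q + ((Finset.range r).filter
          fun k => q ∈ Dset m n (OS a (2 * k + 1))).card = r := by
        have h0 := sum_expo_apply (Finset.range r) (fun k => OS a (2 * k + 1)) hq
        have hEq' : Etot q = ∑ k ∈ Finset.range r, expo m n (OS a (2 * k + 1)) q := by
          rw [hEdef, Finsupp.finset_sum_apply]
        rw [hEq']
        simpa [Finset.card_range] using h0
      have hEcnt : ((Finset.range r).filter
          fun k => q ∈ Dset m n (OS a (2 * k + 1))).card
          = min r (P / 2) - min (Qc / 2) (min r (P / 2)) := by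
        have e2 : ∀ k : ℕ, k < r →
            ((q ∈ Dset m n (OS a (2 * k + 1))) ↔ (Qc ≤ 2 * k + 1 ∧ 2 * k + 1 < P)) := by
          intro k hk
          have hklt : 2 * k + 1 < t := by omega
          rw [mem_D_iff hq]
          simp only [← hidef, ← hjdef]
          have h1 : OS a (2 * k + 1) i ≤ j ↔ 2 * k + 1 + 1 ≤ P :=
            OS_le_iff HA hklt (by omega)
          have h2 : OS a (2 * k + 1) (i + 1) ≤ j ↔ 2 * k + 1 + 1 ≤ Qc :=
            OS_le_iff HA hklt (by omega)
          constructor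
          · rintro ⟨ha1, ha2⟩
            have hb1 := h1.mp ha1
            have hb2 : ¬ (OS a (2 * k + 1) (i + 1) ≤ j) := by omega
            rw [h2] at hb2
            omega
          · rintro ⟨hb1, hb2⟩
            have ha1 := h1.mpr (by omega)
            have ha2 : ¬ (OS a (2 * k + 1) (i + 1) ≤ j) := by
              rw [h2]; omega
            exact ⟨ha1, by omega⟩
        have eIco : ((Finset.range r).filter
            fun k => q ∈ Dset m n (OS a (2 * k + 1)))
            = Finset.Ico (min (Qc / 2) (min r (P / 2))) (min r (P / 2)) := by
          ext k
          simp only [Finset.mem_filter, Finset.mem_range, Finset.mem_Ico]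
          constructor
          · rintro ⟨hk, hD⟩
            have := (e2 k hk).mp hD
            omega
          · intro hk
            have hkr : k < r := by omega
            exact ⟨hkr, (e2 k hkr).mpr (by omega)⟩
        rw [eIco, Nat.card_Ico]
      omega
    · -- q outside V : Etot q = 0
      have hE0 : Etot q = 0 := by
        rw [hEdef, Finsupp.finset_sum_apply]
        apply Finset.sum_eq_zero
        intro k _
        rw [expo_apply]
        simp [Finset.mem_sdiff, hq]
      simp [hE0]
  -- assemble
  have hfact : x = monomial (Dtot - 2 • Etot) (1 : K) * (monomial Etot (1 : K)) ^ 2 := by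
    rw [monomial_pow, one_pow, monomial_mul, one_mul, hxD, tsub_add_cancel_of_le hle]
  rw [hfact]
  exact Ideal.mul_mem_left _ _ (Ideal.subset_span ⟨Etot, hM, rfl⟩)
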